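/- Every right R-module is co-Kasch if and only if co-Kasch right modules are closed under direct summands, if and only if co-Kasch right modules are closed under factor modules. -/
import Mathlib


def IsCoKasch (R : Type*) [Ring R] (M : Type*) [AddCommGroup M] [Module R M] : Prop :=
  ∀ (K : Submodule R M) (S : Submodule R (M ⧸ K)), IsSimpleModule R S →
    ∃ f : M →ₗ[R] S, Function.Surjective f

section Aux

variable {R : Type*} [Ring R]

lemma simple_surj_from_ring {S : Type*} [AddCommGroup S] [Module R S]
    (h : IsSimpleModule R S) : ∃ f : R →ₗ[R] S, Function.Surjective f := by
  haveI := h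
  haveI : Nontrivial S := IsSimpleModule.nontrivial R S
  obtain ⟨s, hs⟩ := exists_ne (0 : S)
  refine ⟨LinearMap.toSpanSingleton R S s, ?_⟩
  rw [← LinearMap.range_eq_top, ← LinearMap.span_singleton_eq_range]
  rcases (IsSimpleOrder.eq_bot_or_eq_top (R ∙ s)) with h' | h'
  · have : s ∈ (R ∙ s) := Submodule.mem_span_singleton_self s
    rw [h'] at this
    exact absurd this (by simpa using hs)
  · exact h'

lemma cok_prod_ring (M : Type*) [AddCommGroup M] [Module R M] :
    IsCoKasch R (M × R) := by
  intro K S hS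
  obtain ⟨f, hf⟩ := simple_surj_from_ring hS
  exact ⟨f ∘ₗ LinearMap.snd R M R, hf.comp Prod.snd_surjective⟩

lemma IsCoKasch.congr {M N : Type*} [AddCommGroup M] [Module R M]
    [AddCommGroup N] [Module R N] (e : M ≃ₗ[R] N) (h : IsCoKasch R M) :
    IsCoKasch R N := by
  intro K S hS
  let K' : Submodule R M := K.comap (e : M →ₗ[R] N)
  have hmap : K'.map (e : M →ₗ[R] N) = K := by
    rw [Submodule.map_comap_eq, LinearEquiv.range, top_inf_eq]
  let q : (M ⧸ K') ≃ₗ[R] (N ⧸ K) := Submodule.Quotient.equiv K' K e hmap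
  let S' : Submodule R (M ⧸ K') := S.comap (q : (M ⧸ K') →ₗ[R] (N ⧸ K))
  have hmapS : S'.map (q : (M ⧸ K') →ₗ[R] (N ⧸ K)) = S := by
    rw [Submodule.map_comap_eq, LinearEquiv.range, top_inf_eq]
  let eS : S' ≃ₗ[R] S := (q.submoduleMap S').trans (LinearEquiv.ofEq _ _ hmapS)
  haveI := hS
  have hS' : IsSimpleModule R S' := IsSimpleModule.congr eS
  obtain ⟨f, hf⟩ := h K' S' hS'
  exact ⟨(eS : S' →ₗ[R] S) ∘ₗ f ∘ₗ (e.symm : N →ₗ[R] M),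
    eS.surjective.comp (hf.comp e.symm.surjective)⟩

end Aux

/-- Every module is co-Kasch iff co-Kasch modules are closed under direct
summands, iff co-Kasch modules are closed under factor modules. -/
theorem stmt11 (R : Type u) [Ring R] :
    ((∀ (M : Type u) [AddCommGroup M] [Module R M], IsCoKasch R M) ↔
      (∀ (A B : Type u) [AddCommGroup A] [Module R A] [AddCommGroup B] [Module R B],
        IsCoKasch R (A × B) → IsCoKasch R A)) ∧
    ((∀ (M : Type u) [AddCommGroup M] [Module R M], IsCoKasch R M) ↔
      (∀ (M : Type u) [AddCommGroup M] [Module R M], IsCoKasch R M →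
        ∀ K : Submodule R M, IsCoKasch R (M ⧸ K))) := by
  constructor
  · constructor
    · intro h A B _ _ _ _ _
      exact h A
    · intro h M _ _
      exact h M R (cok_prod_ring M)
  · constructor
    · intro h M _ _ _ K
      exact h (M ⧸ K)
    · intro h M _ _
      have hq := h (M × R) (cok_prod_ring M) (LinearMap.ker (LinearMap.fst R M R))
      exact IsCoKasch.congr
        ((LinearMap.fst R M R).quotKerEquivOfSurjective Prod.fst_surjective) hq
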